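/- Let x be a binary word with balance f(u) = |u|_0 - |u|_1. For an integer k ≥ 1, if x[i,j] is a minimal k-substring and x[p,q] is a minimal (-k)-substring, then the intervals [i,j] and [p,q] are disjoint. -/
import Mathlib

def bal (u : List Bool) : ℤ := (u.count false : ℤ) - (u.count true : ℤ)

def sub (x : List Bool) (i j : ℕ) : List Bool := (x.drop i).take (j - i + 1)

def IsSub (x : List Bool) (i j : ℕ) (t : ℤ) : Prop :=
  i ≤ j ∧ j < x.length ∧ bal (sub x i j) = t

def MinimalSub (x : List Bool) (i j : ℕ) (t : ℤ) : Prop :=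
  IsSub x i j t ∧
    ∀ i' j' : ℕ, i ≤ i' → i' ≤ j' → j' ≤ j → (i', j') ≠ (i, j) → bal (sub x i' j') ≠ t

lemma bal_append (u v : List Bool) : bal (u ++ v) = bal u + bal v := by
  simp [bal, List.count_append]; ring

lemma sub_split (x : List Bool) {i r s : ℕ} (hir : i ≤ r) (hrs : r < s) :
    sub x i s = sub x i r ++ sub x (r+1) s := by
  unfold sub
  have h1 : s - i + 1 = (r - i + 1) + (s - (r+1) + 1) := by omega
  rw [h1, List.take_add, List.drop_drop, show i + (r - i + 1) = r + 1 from by omega]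

lemma sub_single (x : List Bool) {s : ℕ} (hs : s < x.length) :
    ∃ b : Bool, sub x s s = [b] := by
  unfold sub
  have : x.drop s ≠ [] := by
    simp [List.drop_eq_nil_iff]; omega
  cases h : x.drop s with
  | nil => exact absurd h this
  | cons b l => exact ⟨b, by simp [h]⟩

lemma bal_single_le (b : Bool) : bal [b] ≤ 1 ∧ -1 ≤ bal [b] := by
  cases b <;> simp [bal]

lemma ivt (g : ℕ → ℤ) (c : ℤ) :
    ∀ n a, (∀ t, a ≤ t → t + 1 ≤ a + n → g (t+1) ≤ g t + 1) →
      g a ≤ c → c ≤ g (a + n) → ∃ t, a ≤ t ∧ t ≤ a + n ∧ g t = c := by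
  intro n
  induction n with
  | zero =>
    intro a _ h1 h2
    exact ⟨a, le_refl _, by omega, by simp at h2; omega⟩
  | succ n ih =>
    intro a hstep h1 h2
    rcases le_or_gt c (g (a + n)) with h | h
    · obtain ⟨t, ht1, ht2, ht3⟩ := ih a (fun t ht ht' => hstep t ht (by omega)) h1 h
      exact ⟨t, ht1, by omega, ht3⟩
    · refine ⟨a + n + 1, by omega, by omega, ?_⟩
      have hs := hstep (a+n) (by omega) (by omega)
      have h2' : c ≤ g (a + n + 1) := by
        have : a + (n+1) = a + n + 1 := by omega
        rwa [this] at h2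
      omega

lemma minimal_bounds {x : List Bool} {i j : ℕ} {k : ℤ} (h : MinimalSub x i j k) (hk : 1 ≤ k) :
    ∀ s, i ≤ s → s ≤ j → 1 ≤ bal (sub x i s) ∧ (s < j → bal (sub x i s) ≤ k - 1) := by
  obtain ⟨⟨hij, hjlen, hbal⟩, hmin⟩ := h
  set g : ℕ → ℤ := fun s => bal (sub x i s) with hg
  have hstep : ∀ t, i ≤ t → t + 1 ≤ j → g (t+1) ≤ g t + 1 := by
    intro t hit htj
    have hsplit := sub_split x (i := i) (r := t) (s := t+1) hit (by omega)
    obtain ⟨b, hb⟩ := sub_single x (s := t+1) (by omega)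
    have : g (t+1) = g t + bal [b] := by
      simp only [hg, hsplit, bal_append, hb]
    have := (bal_single_le b).1
    omega
  -- upper bound
  have upper : ∀ s, i ≤ s → s < j → g s ≤ k - 1 := by
    intro s his hsj
    by_contra hcon
    push_neg at hcon
    have hgi : g i ≤ k := by
      obtain ⟨b, hb⟩ := sub_single x (s := i) (by omega)
      have : g i = bal [b] := by simp only [hg]; rw [hb]
      have := (bal_single_le b).1
      omega
    obtain ⟨t, ht1, ht2, ht3⟩ := ivt g k (s - i) i
      (fun t ht ht' => hstep t ht (by omega)) hgi
      (by have : i + (s - i) = s := by omega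
          rw [this]; omega)
    exact hmin i t le_rfl ht1 (by omega) (by simp; omega) ht3
  have lower : ∀ s, i ≤ s → s ≤ j → 1 ≤ g s := by
    intro s his hsj
    by_contra hcon
    push_neg at hcon
    obtain ⟨t, ht1, ht2, ht3⟩ := ivt g 0 (j - s) s
      (fun t ht ht' => hstep t (by omega) (by omega)) (by omega)
      (by have : s + (j - s) = j := by omega
          rw [this]; show (0:ℤ) ≤ g j; simp only [hg]; omega)
    have htj2 : t ≤ j := by omega
    have hgj : g j = k := hbal
    have htj : t < j := by
      rcases eq_or_lt_of_le htj2 with h | h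
      · exfalso; rw [h] at ht3; omega
      · exact h
    have hsplit := sub_split x (i := i) (r := t) (s := j) (by omega) htj
    have : bal (sub x (t+1) j) = k := by
      have := hsplit
      have h2 : g j = g t + bal (sub x (t+1) j) := by
        simp only [hg, hsplit, bal_append]
      omega
    exact hmin (t+1) j (by omega) (by omega) le_rfl (by simp; omega) this
  intro s his hsj
  exact ⟨lower s his hsj, fun h => upper s his h⟩

lemma min_prefix {x : List Bool} {i j : ℕ} {k : ℤ} (h : MinimalSub x i j k) (hk : 1 ≤ k) :
    ∀ s, i ≤ s → s ≤ j → 1 ≤ bal (sub x i s) :=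
  fun s a b => (minimal_bounds h hk s a b).1

lemma min_suffix {x : List Bool} {i j : ℕ} {k : ℤ} (h : MinimalSub x i j k) (hk : 1 ≤ k) :
    ∀ r, i ≤ r → r ≤ j → 1 ≤ bal (sub x r j) := by
  intro r hir hrj
  rcases eq_or_lt_of_le hir with rfl | hir'
  · have := h.1.2.2; omega
  · have hsplit := sub_split x (i := i) (r := r - 1) (s := j) (by omega) (by omega)
    have h2 : bal (sub x i j) = bal (sub x i (r-1)) + bal (sub x ((r-1)+1) j) := by
      rw [hsplit, bal_append]
    have h3 : bal (sub x i (r-1)) ≤ k - 1 :=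
      (minimal_bounds h hk (r-1) (by omega) (by omega)).2 (by omega)
    have h4 : bal (sub x i j) = k := h.1.2.2
    have h5 : (r-1)+1 = r := by omega
    rw [h5] at h2
    omega

lemma min_all {x : List Bool} {i j : ℕ} {k : ℤ} (h : MinimalSub x i j k) (hk : 1 ≤ k) :
    ∀ r s, i ≤ r → r ≤ s → s ≤ j → 1 - k ≤ bal (sub x r s) := by
  intro r s hir hrs hsj
  rcases eq_or_lt_of_le hir with rfl | hir'
  · have := (minimal_bounds h hk s hrs hsj).1; omega
  · have hsplit := sub_split x (i := i) (r := r - 1) (s := s) (by omega) (by omega)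
    have h2 : bal (sub x i s) = bal (sub x i (r-1)) + bal (sub x ((r-1)+1) s) := by
      rw [hsplit, bal_append]
    have h3 : bal (sub x i (r-1)) ≤ k - 1 :=
      (minimal_bounds h hk (r-1) (by omega) (by omega)).2 (by omega)
    have h4 : 1 ≤ bal (sub x i s) := (minimal_bounds h hk s (by omega) hsj).1
    have h5 : (r-1)+1 = r := by omega
    rw [h5] at h2
    omega

lemma bal_map_not (u : List Bool) : bal (u.map not) = - bal u := by
  induction u with
  | nil => simp [bal]
  | cons b t ih =>
    cases b <;> simp [bal, List.count_cons] at * <;> omega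

lemma sub_map_not (x : List Bool) (r s : ℕ) :
    sub (x.map not) r s = (sub x r s).map not := by
  simp [sub, List.map_take, List.map_drop]

lemma minimal_map {x : List Bool} {p q : ℕ} {t : ℤ} (h : MinimalSub x p q t) :
    MinimalSub (x.map not) p q (-t) := by
  obtain ⟨⟨hpq, hlen, hbal⟩, hmin⟩ := h
  refine ⟨⟨hpq, by simpa using hlen, ?_⟩, ?_⟩
  · rw [sub_map_not, bal_map_not, hbal]
  · intro i' j' h1 h2 h3 h4 hbal'
    rw [sub_map_not, bal_map_not] at hbal'
    exact hmin i' j' h1 h2 h3 h4 (by omega)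

theorem stmt2 (x : List Bool) (k : ℤ) (hk : 1 ≤ k)
    (i j p q : ℕ) (h1 : MinimalSub x i j k) (h2 : MinimalSub x p q (-k)) :
    ∀ m : ℕ, ¬ (i ≤ m ∧ m ≤ j ∧ p ≤ m ∧ m ≤ q) := by
  rintro m ⟨him, hmj, hpm, hmq⟩
  have h2' : MinimalSub (x.map not) p q k := by
    have := minimal_map h2; rwa [neg_neg] at this
  have hbal1 : bal (sub x i j) = k := h1.1.2.2
  have hbal2 : bal (sub x p q) = -k := h2.1.2.2
  rcases le_total i p with hip | hpi <;> rcases le_total j q with hjq | hqj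
  · have ha : 1 ≤ bal (sub x p j) := min_suffix h1 hk p hip (by omega)
    have hb : 1 ≤ bal (sub (x.map not) p j) := min_prefix h2' hk j (by omega) hjq
    rw [sub_map_not, bal_map_not] at hb
    omega
  · have := min_all h1 hk p q hip (by omega) hqj
    omega
  · have := min_all h2' hk i j hpi (by omega) hjq
    rw [sub_map_not, bal_map_not] at this
    omega
  · have ha : 1 ≤ bal (sub x i q) := min_prefix h1 hk q (by omega) hqj
    have hb : 1 ≤ bal (sub (x.map not) i q) := min_suffix h2' hk i hpi (by omega)
    rw [sub_map_not, bal_map_not] at hb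
    omega
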